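/- arXiv:1011.6636 — 8 statements merged into one kernel-verified Lean document; each statement's English description precedes it below -/
import Mathlib

section
/- The relation ≥^P satisfies a semigroup property: if ν₁ ≥^P μ₁ and ν₂ ≥^P μ₂, then ν₁ + ν₂ ≥^P μ₁ + μ₂. -/
open Set

open Pointwise

/-- The orbit of `μ` under a (Weyl) group `W` of linear automorphisms of `V`. -/
def WOrbit {V : Type*} [AddCommGroup V] [Module ℝ V]
    (W : Subgroup (V ≃ₗ[ℝ] V)) (μ : V) : Set V := {x | ∃ w ∈ W, w μ = x}

/-- `Ω(μ)`: the intersection of the convex hull of the Weyl orbit of `μ` with the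
cocharacter lattice `Λ`. -/
def OmegaSet {V : Type*} [AddCommGroup V] [Module ℝ V]
    (W : Subgroup (V ≃ₗ[ℝ] V)) (Λ : AddSubgroup V) (μ : V) : Set V :=
  convexHull ℝ (WOrbit W μ) ∩ (Λ : Set V)

/-- `ν ≥^P μ`: `⟨α, ν⟩ = 0` for all roots `α` of the Levi `M`, and
`⟨α, ν + λ⟩ ≥ 0` for all `λ ∈ Ω(μ)` and all roots `α` of `N` (where `P = MN`). -/
def geqP {V : Type*} [AddCommGroup V] [Module ℝ V]
    (ΦM ΦN : Set (Module.Dual ℝ V)) (W : Subgroup (V ≃ₗ[ℝ] V))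
    (Λ : AddSubgroup V) (ν μ : V) : Prop :=
  (∀ α ∈ ΦM, α ν = 0) ∧ ∀ lam ∈ OmegaSet W Λ μ, ∀ α ∈ ΦN, 0 ≤ α (ν + lam)

/-- Semigroup property of the relation `≥^P`: if `ν₁ ≥^P μ₁` and `ν₂ ≥^P μ₂`,
then `ν₁ + ν₂ ≥^P μ₁ + μ₂`.  Here `W` preserves the cocharacter lattice `Λ` and
`μ₁, μ₂` are cocharacters. -/
theorem geqP_semigroup {V : Type*} [AddCommGroup V] [Module ℝ V]
    (W : Subgroup (V ≃ₗ[ℝ] V)) (Λ : AddSubgroup V)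
    (ΦM ΦN : Set (Module.Dual ℝ V))
    (hW : ∀ w ∈ W, ∀ v ∈ Λ, (w : V ≃ₗ[ℝ] V) v ∈ Λ)
    (μ₁ μ₂ ν₁ ν₂ : V) (hμ₁ : μ₁ ∈ Λ) (hμ₂ : μ₂ ∈ Λ)
    (h₁ : geqP ΦM ΦN W Λ ν₁ μ₁) (h₂ : geqP ΦM ΦN W Λ ν₂ μ₂) :
    geqP ΦM ΦN W Λ (ν₁ + ν₂) (μ₁ + μ₂) := by
  obtain ⟨h₁M, h₁N⟩ := h₁
  obtain ⟨h₂M, h₂N⟩ := h₂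
  constructor
  · intro α hα
    rw [map_add, h₁M α hα, h₂M α hα, add_zero]
  · intro lam hlam α hα
    -- A key convexity lemma: if 0 ≤ α (ν + w μ) for all w ∈ W (with μ ∈ Λ),
    -- then 0 ≤ α (ν + x) for all x in the convex hull of the orbit.
    have key : ∀ (ν μ : V), μ ∈ Λ →
        (∀ l ∈ OmegaSet W Λ μ, 0 ≤ α (ν + l)) →
        ∀ x ∈ convexHull ℝ (WOrbit W μ), 0 ≤ α (ν + x) := by
      intro ν μ hμ h x hx
      have hconv : Convex ℝ {y : V | -(α ν) ≤ α y} :=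
        convex_halfSpace_ge (α.isLinear) (-(α ν))
      have hsub : WOrbit W μ ⊆ {y : V | -(α ν) ≤ α y} := by
        rintro _ ⟨w, hw, rfl⟩
        have hmem : (w : V ≃ₗ[ℝ] V) μ ∈ OmegaSet W Λ μ :=
          ⟨subset_convexHull ℝ _ ⟨w, hw, rfl⟩, hW w hw μ hμ⟩
        have := h _ hmem
        simp only [map_add] at this
        simpa [neg_le] using by linarith
      have := convexHull_min hsub hconv hx
      simp only [Set.mem_setOf_eq, neg_le] at this
      rw [map_add]; linarith
    -- Decompose lam as λ₁ + λ₂ with λᵢ in the hulls of the individual orbits.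
    have horb : WOrbit W (μ₁ + μ₂) ⊆ WOrbit W μ₁ + WOrbit W μ₂ := by
      rintro _ ⟨w, hw, rfl⟩
      exact ⟨(w : V ≃ₗ[ℝ] V) μ₁, ⟨w, hw, rfl⟩, (w : V ≃ₗ[ℝ] V) μ₂, ⟨w, hw, rfl⟩,
        (map_add _ _ _).symm⟩
    have hlam' : lam ∈ convexHull ℝ (WOrbit W μ₁) + convexHull ℝ (WOrbit W μ₂) := by
      rw [← convexHull_add]
      exact convexHull_mono horb hlam.1
    obtain ⟨l₁, hl₁, l₂, hl₂, rfl⟩ := hlam'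
    have H1 : 0 ≤ α (ν₁ + l₁) := key ν₁ μ₁ hμ₁ (fun l hl => h₁N l hl α hα) l₁ hl₁
    have H2 : 0 ≤ α (ν₂ + l₂) := key ν₂ μ₂ hμ₂ (fun l hl => h₂N l hl α hα) l₂ hl₂
    have : α (ν₁ + ν₂ + (l₁ + l₂)) = α (ν₁ + l₁) + α (ν₂ + l₂) := by
      simp only [map_add]; ring
    rw [this]
    positivity
end

section
/- The relation ≥^P is homogeneous: for every integer z ≥ 1 and cocharacters μ, ν, one has ν ≥^P μ if and only if zν ≥^P zμ. -/
open Set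

open Pointwise in
private lemma hull_smul_eq {V : Type*} [AddCommGroup V] [Module ℝ V]
    (W : Subgroup (V ≃ₗ[ℝ] V)) (μ : V) (z : ℤ) :
    convexHull ℝ (WOrbit W (z • μ)) = (z : ℝ) • convexHull ℝ (WOrbit W μ) := by
  rw [← convexHull_smul]
  congr 1
  ext x
  constructor
  · rintro ⟨w, hw, rfl⟩
    exact ⟨w μ, ⟨w, hw, rfl⟩, by simp only [← Int.cast_smul_eq_zsmul ℝ z, map_smul]⟩
  · rintro ⟨y, ⟨w, hw, rfl⟩, rfl⟩
    exact ⟨w, hw, by simp only [← Int.cast_smul_eq_zsmul ℝ z, map_smul]⟩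

/-- If the inequality holds on lattice points of the hull, and the orbit consists of
lattice points, then it holds on the whole hull. -/
private lemma hull_ineq {V : Type*} [AddCommGroup V] [Module ℝ V]
    (W : Subgroup (V ≃ₗ[ℝ] V)) (Λ : AddSubgroup V)
    (hW : ∀ w ∈ W, ∀ v ∈ Λ, (w : V ≃ₗ[ℝ] V) v ∈ Λ)
    (μ ν : V) (hμ : μ ∈ Λ) (α : Module.Dual ℝ V)
    (h : ∀ lam ∈ OmegaSet W Λ μ, 0 ≤ α (ν + lam)) :
    ∀ x ∈ convexHull ℝ (WOrbit W μ), 0 ≤ α (ν + x) := by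
  have hconv : Convex ℝ {x : V | 0 ≤ α (ν + x)} := by
    intro a ha b hb s t hs ht hst
    simp only [mem_setOf_eq, map_add, map_smul, smul_eq_mul] at *
    have e : s * α ν + t * α ν = α ν := by rw [← add_mul, hst, one_mul]
    nlinarith [mul_nonneg hs ha, mul_nonneg ht hb]
  have hsub : WOrbit W μ ⊆ {x : V | 0 ≤ α (ν + x)} := by
    rintro x ⟨w, hw, rfl⟩
    exact h _ ⟨subset_convexHull ℝ _ ⟨w, hw, rfl⟩, hW w hw μ hμ⟩
  exact convexHull_min hsub hconv

/-- Homogeneity of the relation `≥^P`: for every integer `z ≥ 1`,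
`ν ≥^P μ` if and only if `zν ≥^P zμ`. -/
theorem geqP_homogeneous {V : Type*} [AddCommGroup V] [Module ℝ V]
    (W : Subgroup (V ≃ₗ[ℝ] V)) (Λ : AddSubgroup V)
    (ΦM ΦN : Set (Module.Dual ℝ V))
    (hW : ∀ w ∈ W, ∀ v ∈ Λ, (w : V ≃ₗ[ℝ] V) v ∈ Λ)
    (μ ν : V) (hμ : μ ∈ Λ) (hν : ν ∈ Λ)
    (z : ℤ) (hz : 1 ≤ z) :
    geqP ΦM ΦN W Λ ν μ ↔ geqP ΦM ΦN W Λ (z • ν) (z • μ) := by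

  have hz0 : (0:ℝ) < (z:ℝ) := by exact_mod_cast hz.trans_lt' zero_lt_one
  constructor
  · rintro ⟨h1, h2⟩
    constructor
    · intro α hα
      rw [map_zsmul, h1 α hα, smul_zero]
    · rintro lam ⟨hlamh, hlamΛ⟩ α hα
      rw [hull_smul_eq] at hlamh
      obtain ⟨y, hy, rfl⟩ := hlamh
      have := hull_ineq W Λ hW μ ν hμ α (fun l hl => h2 l hl α hα) y hy
      have hcalc : α (z • ν + (z:ℝ) • y) = (z:ℝ) * α (ν + y) := by
        rw [← Int.cast_smul_eq_zsmul ℝ z ν]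
        simp [map_add, map_smul, mul_add]
      rw [hcalc]
      positivity
  · rintro ⟨h1, h2⟩
    constructor
    · intro α hα
      have := h1 α hα
      rw [map_zsmul] at this
      have hzne : (z:ℝ) ≠ 0 := hz0.ne'
      have : (z:ℝ) * α ν = 0 := by rw [← this, ← Int.cast_smul_eq_zsmul ℝ]; simp [smul_eq_mul]
      exact (mul_eq_zero.1 this).resolve_left hzne
    · rintro lam ⟨hlamh, hlamΛ⟩ α hα
      have hmem : z • lam ∈ OmegaSet W Λ (z • μ) := by
        refine ⟨?_, AddSubgroup.zsmul_mem Λ hlamΛ z⟩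
        rw [hull_smul_eq, ← Int.cast_smul_eq_zsmul ℝ]
        exact Set.smul_mem_smul_set hlamh
      have := h2 _ hmem α hα
      have hcalc : α (z • ν + z • lam) = (z:ℝ) * α (ν + lam) := by
        rw [← Int.cast_smul_eq_zsmul ℝ z ν, ← Int.cast_smul_eq_zsmul ℝ z lam]
        simp [map_add, map_smul, mul_add]
      rw [hcalc] at this
      exact nonneg_of_mul_nonneg_right this hz0
end

section
/- If ν ≥^P μ and the path model sets are defined as below, then translation by ν gives a bijection between the set of LS paths of type μ from the origin to λ contained in the M-dominant chamber Δ_M, and the set of LS paths of type μ from ν to ν + λ contained in the G-dominant chamber Δ_G: ν + (𝔹_μ(o,λ) ∩ Δ_M) = 𝔹_μ(ν, ν+λ) ∩ Δ_G. -/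
open Set

/-- The closed dominant cone determined by a set `Φ` of (positive) roots,
viewed as linear functionals. -/
def domCone {V : Type*} [AddCommGroup V] [Module ℝ V]
    (Φ : Set (Module.Dual ℝ V)) : Set V := {x | ∀ α ∈ Φ, 0 ≤ α x}

/-- The set of paths of a given type `B` (paths starting at the origin) translated so as
to go from `x` to `y`: a path `p` with `p − x ∈ B` and `p 1 = y`. -/
def PathsFromTo {V : Type*} [AddCommGroup V] (B : Set (ℝ → V)) (x y : V) : Set (ℝ → V) :=
  {p | (fun t => p t - x) ∈ B ∧ p 1 = y}

/-- A path is contained in the subset `C` (on the parameter interval `[0,1]`). -/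
def PathIn {V : Type*} (p : ℝ → V) (C : Set V) : Prop :=
  ∀ t ∈ Set.Icc (0 : ℝ) 1, p t ∈ C

/-- If `ν ≥^P μ`, then translation by `ν` identifies the set of LS paths of type `μ`
from the origin to `λ` contained in the `M`-dominant chamber `Δ_M` with the set of LS
paths of type `μ` from `ν` to `ν + λ` contained in the `G`-dominant chamber `Δ_G`:
`ν + (𝔹_μ(o,λ) ∩ Δ_M) = 𝔹_μ(ν, ν+λ) ∩ Δ_G`.  Here `B` is the set of LS paths of
type `μ`: each starts at the origin and lies in `Conv(Wμ)`. -/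
theorem ls_paths_translate {V : Type*} [AddCommGroup V] [Module ℝ V]
    (W : Subgroup (V ≃ₗ[ℝ] V)) (Λ : AddSubgroup V)
    (ΦM ΦMp ΦN : Set (Module.Dual ℝ V)) (hMp : ΦMp ⊆ ΦM)
    (hW : ∀ w ∈ W, ∀ v ∈ Λ, (w : V ≃ₗ[ℝ] V) v ∈ Λ)
    (μ : V) (hμΛ : μ ∈ Λ) (hμdom : μ ∈ domCone (ΦMp ∪ ΦN))
    (B : Set (ℝ → V))
    (hstart : ∀ p ∈ B, p 0 = 0)
    (hconv : ∀ p ∈ B, ∀ t ∈ Set.Icc (0 : ℝ) 1, p t ∈ convexHull ℝ (WOrbit W μ))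
    (lam ν : V) (hlamΛ : lam ∈ Λ) (hlamdom : lam ∈ domCone ΦMp)
    (hgeq : geqP ΦM ΦN W Λ ν μ) :
    (fun p : ℝ → V => fun t => ν + p t) ''
        (PathsFromTo B 0 lam ∩ {p | PathIn p (domCone ΦMp)})
      = PathsFromTo B ν (ν + lam) ∩ {p | PathIn p (domCone (ΦMp ∪ ΦN))} := by
  ext q
  -- key fact: for α ∈ ΦN, α(ν + x) ≥ 0 for all x in the convex hull of the orbit
  have hkey : ∀ x ∈ convexHull ℝ (WOrbit W μ), ∀ α ∈ ΦN, 0 ≤ α (ν + x) := by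
    intro x hx α hα
    have hCconv : Convex ℝ {y : V | 0 ≤ α (ν + y)} := by
      intro a ha b hb s t hs ht hst
      simp only [Set.mem_setOf_eq, map_add, map_smul, smul_eq_mul] at *
      have h1 : s * (α ν) + t * (α ν) = α ν := by rw [← add_mul, hst, one_mul]
      nlinarith [mul_nonneg hs ha, mul_nonneg ht hb]
    have horb : WOrbit W μ ⊆ {y : V | 0 ≤ α (ν + y)} := by
      rintro y ⟨w, hw, rfl⟩
      have hyΛ : (w : V ≃ₗ[ℝ] V) μ ∈ Λ := hW w hw μ hμΛ
      have hyhull : (w : V ≃ₗ[ℝ] V) μ ∈ convexHull ℝ (WOrbit W μ) :=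
        subset_convexHull ℝ _ ⟨w, hw, rfl⟩
      exact hgeq.2 _ ⟨hyhull, hyΛ⟩ α hα
    exact convexHull_min horb hCconv hx
  have hν0 : ∀ α ∈ ΦMp, α ν = 0 := fun α hα => hgeq.1 α (hMp hα)
  constructor
  · rintro ⟨p, ⟨⟨hpB, hp1⟩, hpin⟩, rfl⟩
    refine ⟨⟨?_, ?_⟩, ?_⟩
    · have : (fun t => (ν + p t) - ν) = fun t => p t - 0 := by
        funext t; abel
      rw [this]; exact hpB
    · show ν + p 1 = ν + lam
      rw [hp1]
    · intro t ht α hα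
      rcases hα with hα | hα
      · have := hpin t ht α hα
        simp only [map_add, hν0 α hα]
        linarith
      · have hpt : p t ∈ convexHull ℝ (WOrbit W μ) := by
          have := hconv _ hpB t ht
          simpa using this
        exact hkey _ hpt α hα
  · rintro ⟨⟨hqB, hq1⟩, hqin⟩
    refine ⟨fun t => q t - ν, ⟨⟨?_, ?_⟩, ?_⟩, ?_⟩
    · have : (fun t => (q t - ν) - 0) = fun t => q t - ν := by
        funext t; abel
      rw [this]; exact hqB
    · show q 1 - ν = lam
      rw [hq1]; abel
    · intro t ht α hα
      have := hqin t ht α (Or.inl hα)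
      simp only [map_sub, hν0 α hα]
      linarith
    · funext t; show ν + (q t - ν) = q t; abel
end

section
/- The set of pairs (μ, λ) of a G-dominant coweight μ and M-dominant coweight λ with μ − λ in the coroot lattice and r_μ(λ) ≠ 0 is a semigroup: if r_{μ₁}(λ₁) ≠ 0 and r_{μ₂}(λ₂) ≠ 0 then r_{μ₁+μ₂}(λ₁+λ₂) ≠ 0. -/
open Set

/-- Semigroup property for restriction multiplicities: the set of pairs `(μ, λ)` of a
`G`-dominant coweight `μ` and an `M`-dominant coweight `λ` with `μ − λ` in the coroot
lattice and `r_μ(λ) ≠ 0` is a semigroup.  Available facts: the set of triples with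
nonzero tensor multiplicity `n` is a semigroup, and `r_μ(λ) = n_{ν+λ, μ*}(ν)` for any
`ν ≥^P μ`, where `μ* = −w₀μ`. -/
theorem restriction_multiplicity_semigroup
    {V : Type*} [AddCommGroup V] [Module ℝ V]
    (W : Subgroup (V ≃ₗ[ℝ] V)) (Λ Qlat : AddSubgroup V)
    (ΦM ΦMp ΦN : Set (Module.Dual ℝ V)) (hMp : ΦMp ⊆ ΦM)
    (hW : ∀ w ∈ W, ∀ v ∈ Λ, (w : V ≃ₗ[ℝ] V) v ∈ Λ)
    (w0 : V ≃ₗ[ℝ] V) (hw0 : w0 ∈ W)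
    (r : V → V → ℕ) (n : V → V → V → ℕ)
    (hsemi : ∀ α β γ α' β' γ' : V, n α β γ ≠ 0 → n α' β' γ' ≠ 0 →
      n (α + α') (β + β') (γ + γ') ≠ 0)
    (hrn : ∀ μ lam ν : V, μ ∈ domCone (ΦMp ∪ ΦN) → lam ∈ domCone ΦMp →
      geqP ΦM ΦN W Λ ν μ → r μ lam = n (ν + lam) (-(w0 μ)) ν)
    (hex : ∀ μ : V, ∃ ν : V, geqP ΦM ΦN W Λ ν μ)
    (μ₁ μ₂ lam₁ lam₂ : V)
    (hμ₁Λ : μ₁ ∈ Λ) (hμ₂Λ : μ₂ ∈ Λ) (hlam₁Λ : lam₁ ∈ Λ) (hlam₂Λ : lam₂ ∈ Λ)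
    (hμ₁ : μ₁ ∈ domCone (ΦMp ∪ ΦN)) (hμ₂ : μ₂ ∈ domCone (ΦMp ∪ ΦN))
    (hlam₁ : lam₁ ∈ domCone ΦMp) (hlam₂ : lam₂ ∈ domCone ΦMp)
    (hQ₁ : μ₁ - lam₁ ∈ Qlat) (hQ₂ : μ₂ - lam₂ ∈ Qlat)
    (h₁ : r μ₁ lam₁ ≠ 0) (h₂ : r μ₂ lam₂ ≠ 0) :
    r (μ₁ + μ₂) (lam₁ + lam₂) ≠ 0 := by
  obtain ⟨ν₁, hν₁⟩ := hex μ₁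
  obtain ⟨ν₂, hν₂⟩ := hex μ₂
  have hdomμ : μ₁ + μ₂ ∈ domCone (ΦMp ∪ ΦN) := by
    intro α hα
    have h1 := hμ₁ α hα
    have h2 := hμ₂ α hα
    simpa [map_add] using add_nonneg h1 h2
  have hdomlam : lam₁ + lam₂ ∈ domCone ΦMp := by
    intro α hα
    simpa [map_add] using add_nonneg (hlam₁ α hα) (hlam₂ α hα)
  have hgeq : geqP ΦM ΦN W Λ (ν₁ + ν₂) (μ₁ + μ₂) := by
    constructor
    · intro α hα
      simp [map_add, hν₁.1 α hα, hν₂.1 α hα]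
    · intro lam hlam α hα
      have hconv : convexHull ℝ (WOrbit W (μ₁ + μ₂)) ⊆
          {x : V | -(α (ν₁ + ν₂)) ≤ α x} := by
        apply convexHull_min
        · rintro x ⟨w, hw, rfl⟩
          have h1 : (w : V ≃ₗ[ℝ] V) μ₁ ∈ OmegaSet W Λ μ₁ :=
            ⟨subset_convexHull ℝ _ ⟨w, hw, rfl⟩, hW w hw μ₁ hμ₁Λ⟩
          have h2 : (w : V ≃ₗ[ℝ] V) μ₂ ∈ OmegaSet W Λ μ₂ :=
            ⟨subset_convexHull ℝ _ ⟨w, hw, rfl⟩, hW w hw μ₂ hμ₂Λ⟩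
          have e1 := hν₁.2 _ h1 α hα
          have e2 := hν₂.2 _ h2 α hα
          simp only [map_add] at e1 e2 ⊢
          simp only [Set.mem_setOf_eq, map_add]
          linarith
        · exact convex_halfSpace_ge (LinearMap.isLinear α) _
      have := hconv hlam.1
      simp only [Set.mem_setOf_eq, map_add] at this ⊢
      linarith
  have e1 := hrn μ₁ lam₁ ν₁ hμ₁ hlam₁ hν₁
  have e2 := hrn μ₂ lam₂ ν₂ hμ₂ hlam₂ hν₂
  have e := hrn (μ₁ + μ₂) (lam₁ + lam₂) (ν₁ + ν₂) hdomμ hdomlam hgeq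
  rw [e1] at h₁
  rw [e2] at h₂
  have hw0add : -(w0 (μ₁ + μ₂)) = -(w0 μ₁) + -(w0 μ₂) := by
    rw [map_add]; abel
  rw [e, hw0add, show ν₁ + ν₂ + (lam₁ + lam₂) = (ν₁ + lam₁) + (ν₂ + lam₂) by abel]
  exact hsemi _ _ _ _ _ _ h₁ h₂
end

section
/- Uniform saturation for restriction multiplicities: if μ − λ lies in the coroot lattice and r_{Nμ}(Nλ) ≠ 0 for some integer N ≥ 1, then r_{k_Φ² μ}(k_Φ² λ) ≠ 0, where k_Φ is the least common multiple of the coefficients of the highest root in terms of simple roots. In particular, for G of type A, the set of (μ,λ) with r_μ(λ) ≠ 0 is saturated. -/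
open Set Pointwise

/-- Uniform saturation for restriction multiplicities: if `μ − λ` lies in the coroot
lattice `Qlat` and `r_{Nμ}(Nλ) ≠ 0` for some integer `N ≥ 1`, then
`r_{k_Φ² μ}(k_Φ² λ) ≠ 0`, where `kPhi = k_Φ` is the least common multiple of the
coefficients of the highest root in terms of the simple roots.  Available facts:
the Kapovich–Millson saturation theorem for tensor multiplicities `n` with factor
`k_Φ²`, the identity `r_μ(λ) = n_{ν+λ, μ*}(ν)` for `ν ≥^P μ` (with `μ* = −w₀μ`),
and homogeneity of `≥^P`. -/
theorem restriction_multiplicity_saturation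
    {V : Type*} [AddCommGroup V] [Module ℝ V]
    (W : Subgroup (V ≃ₗ[ℝ] V)) (Λ Qlat : AddSubgroup V)
    (ΦM ΦMp ΦN : Set (Module.Dual ℝ V)) (hMp : ΦMp ⊆ ΦM)
    (hW : ∀ w ∈ W, ∀ v ∈ Λ, (w : V ≃ₗ[ℝ] V) v ∈ Λ)
    (w0 : V ≃ₗ[ℝ] V) (hw0 : w0 ∈ W)
    (r : V → V → ℕ) (n : V → V → V → ℕ) (kPhi : ℕ) (hk : 1 ≤ kPhi)
    (hsat : ∀ α β γ : V, α + β - γ ∈ Qlat →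
      (∃ N : ℕ, 1 ≤ N ∧ n (N • α) (N • β) (N • γ) ≠ 0) →
      n ((kPhi ^ 2) • α) ((kPhi ^ 2) • β) ((kPhi ^ 2) • γ) ≠ 0)
    (hrn : ∀ μ lam ν : V, μ ∈ domCone (ΦMp ∪ ΦN) → lam ∈ domCone ΦMp →
      geqP ΦM ΦN W Λ ν μ → r μ lam = n (ν + lam) (-(w0 μ)) ν)
    (hex : ∀ μ : V, ∃ ν : V, geqP ΦM ΦN W Λ ν μ)
    (hQs : ∀ μ lam : V, μ - lam ∈ Qlat → lam + -(w0 μ) ∈ Qlat)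
    (μ lam : V) (hμΛ : μ ∈ Λ) (hlamΛ : lam ∈ Λ)
    (hμ : μ ∈ domCone (ΦMp ∪ ΦN)) (hlam : lam ∈ domCone ΦMp)
    (hQ : μ - lam ∈ Qlat)
    (N : ℕ) (hN : 1 ≤ N) (hrN : r (N • μ) (N • lam) ≠ 0) :
    r ((kPhi ^ 2) • μ) ((kPhi ^ 2) • lam) ≠ 0 := by

  obtain ⟨ν, hν⟩ := hex μ
  -- Step 1: the linear functionals in ΦN are nonneg on ν + (whole hull of the orbit)
  have hullA : ∀ α ∈ ΦN, ∀ x ∈ convexHull ℝ (WOrbit W μ), 0 ≤ α (ν + x) := by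
    intro α hα
    have hconv : Convex ℝ {x : V | 0 ≤ α (ν + x)} := by
      intro x hx y hy a b ha hb hab
      simp only [mem_setOf_eq] at hx hy ⊢
      have h1 : α (ν + (a • x + b • y)) = a * α (ν + x) + b * α (ν + y) := by
        simp only [map_add, map_smul, smul_eq_mul]
        linear_combination α ν * hab.symm
      rw [h1]
      positivity
    have hsub : WOrbit W μ ⊆ {x : V | 0 ≤ α (ν + x)} := by
      rintro x ⟨w, hw, rfl⟩
      exact hν.2 ((w : V ≃ₗ[ℝ] V) μ)
        ⟨subset_convexHull ℝ _ ⟨w, hw, rfl⟩, hW w hw μ hμΛ⟩ α hα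
    exact fun x hx => convexHull_min hsub hconv hx
  -- Step 2: homogeneity of ≥^P
  have hgeq : ∀ c : ℕ, 1 ≤ c → geqP ΦM ΦN W Λ (c • ν) (c • μ) := by
    intro c hc
    refine ⟨fun α hα => by rw [map_nsmul, hν.1 α hα, smul_zero], ?_⟩
    rintro l ⟨hlh, -⟩ α hα
    have hcpos : (0:ℝ) < (c:ℝ) := by exact_mod_cast hc
    have horb : WOrbit W (c • μ) = (c:ℝ) • WOrbit W μ := by
      ext x
      constructor
      · rintro ⟨w, hw, rfl⟩
        refine ⟨(w : V ≃ₗ[ℝ] V) μ, ⟨w, hw, rfl⟩, ?_⟩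
        show (c:ℝ) • (w : V ≃ₗ[ℝ] V) μ = (w : V ≃ₗ[ℝ] V) (c • μ)
        rw [Nat.cast_smul_eq_nsmul, ← map_nsmul]
      · rintro ⟨y, ⟨w, hw, rfl⟩, rfl⟩
        refine ⟨w, hw, ?_⟩
        show (w : V ≃ₗ[ℝ] V) (c • μ) = (c:ℝ) • (w : V ≃ₗ[ℝ] V) μ
        rw [map_nsmul, Nat.cast_smul_eq_nsmul]
    rw [horb, convexHull_smul] at hlh
    obtain ⟨x, hx, rfl⟩ := hlh
    have : α ((c:ℕ) • ν + (c:ℝ) • x) = (c:ℝ) * α (ν + x) := by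
      rw [← Nat.cast_smul_eq_nsmul ℝ, ← smul_add, map_smul, smul_eq_mul]
    rw [this]
    exact mul_nonneg hcpos.le (hullA α hα x hx)
  -- scaled dominance
  have hdom1 : ∀ c : ℕ, c • μ ∈ domCone (ΦMp ∪ ΦN) := by
    intro c α hα
    rw [map_nsmul]
    exact nsmul_nonneg (hμ α hα) c
  have hdom2 : ∀ c : ℕ, c • lam ∈ domCone ΦMp := by
    intro c α hα
    rw [map_nsmul]
    exact nsmul_nonneg (hlam α hα) c
  have hk2 : 1 ≤ kPhi ^ 2 := Nat.one_le_pow _ _ hk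
  have key : ∀ c : ℕ, 1 ≤ c →
      r (c • μ) (c • lam) = n (c • (ν + lam)) (c • (-(w0 μ))) (c • ν) := by
    intro c hc
    rw [hrn (c • μ) (c • lam) (c • ν) (hdom1 c) (hdom2 c) (hgeq c hc)]
    congr 1
    · rw [smul_add]
    · rw [map_nsmul, smul_neg]
  have hQ' : (ν + lam) + (-(w0 μ)) - ν ∈ Qlat := by
    have h := hQs μ lam hQ
    have : (ν + lam) + (-(w0 μ)) - ν = lam + -(w0 μ) := by abel
    rwa [this]
  rw [key (kPhi ^ 2) hk2]
  exact hsat (ν + lam) (-(w0 μ)) ν hQ' ⟨N, hN, by rw [← key N hN]; exact hrN⟩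
end

section
/- Any gallery of alcoves in the apartment 𝒜 whose every wall-crossing is in the J_P-positive direction is a minimal gallery. -/
open Set

/-- The affine hyperplane `H_{β−k}` separates the points `x` and `y` (i.e. they lie on
strictly opposite sides). -/
def Separates {V : Type*} [AddCommGroup V] [Module ℝ V]
    (β : Module.Dual ℝ V) (k : ℤ) (x y : V) : Prop :=
  (β x - k) * (β y - k) < 0

/-- The wall-crossing from (the alcove of) `x` to (the alcove of) `y` across the
hyperplane `H_{β−k}` is in the `J_P`-positive direction: if `β ∈ Φ_N`, we cross from
`{β < k}` to `{β > k}`; if `β ∈ Φ_M⁺`, we cross from the side containing the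
`M`-antidominant alcove `a*_M` (the region where all of `Φ_M⁺` takes values in `(−1,0)`)
to the opposite side. -/
def JPPositiveCrossing {V : Type*} [AddCommGroup V] [Module ℝ V]
    (ΦMp ΦN : Set (Module.Dual ℝ V))
    (β : Module.Dual ℝ V) (k : ℤ) (x y : V) : Prop :=
  (β ∈ ΦN ∧ β x < k ∧ (k : ℝ) < β y) ∨
  (β ∈ ΦMp ∧ ((0 ≤ k ∧ β x < k ∧ (k : ℝ) < β y) ∨
              (k < 0 ∧ (k : ℝ) < β x ∧ β y < k)))

/-- Propagation: if a sequence never crosses from positive to nonpositive at a step,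
then positivity propagates forward. -/
lemma prop_up_aux (r : ℕ) (h : Fin (r + 1) → ℝ)
    (hstep : ∀ i : Fin r, 0 < h i.castSucc → 0 < h i.succ) :
    ∀ (m : ℕ) (hm : m < r + 1) (n : ℕ) (hn : n < r + 1), n ≤ m →
      0 < h ⟨n, hn⟩ → 0 < h ⟨m, hm⟩ := by
  intro m
  induction m with
  | zero =>
    intro hm n hn hle hp
    have : n = 0 := Nat.le_zero.mp hle
    subst this; exact hp
  | succ m ih =>
    intro hm n hn hle hp
    rcases Nat.lt_or_ge n (m + 1) with hlt | hge
    · have hm' : m < r + 1 := by omega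
      have h1 := ih hm' n hn (by omega) hp
      have hmr : m < r := by omega
      have h2 := hstep ⟨m, hmr⟩ (by simpa [Fin.castSucc, Fin.castAdd, Fin.castLE] using h1)
      simpa [Fin.succ] using h2
    · have : n = m + 1 := by omega
      subst this; exact hp

lemma prop_up (r : ℕ) (h : Fin (r + 1) → ℝ)
    (hstep : ∀ i : Fin r, 0 < h i.castSucc → 0 < h i.succ) :
    ∀ n m : Fin (r + 1), n ≤ m → 0 < h n → 0 < h m := by
  intro n m hle hp
  have := prop_up_aux r h hstep m.1 m.2 n.1 n.2 hle (by simpa using hp)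
  simpa using this

/-- If a nowhere-zero sequence changes sign from start to end, it flips sign at some step. -/
lemma exists_flip (r : ℕ) (h : Fin (r + 1) → ℝ) (hne : ∀ i, h i ≠ 0)
    (hsep : h 0 * h (Fin.last r) < 0) :
    ∃ i : Fin r, h i.castSucc * h i.succ < 0 := by
  by_contra hc
  push_neg at hc
  have key : ∀ (m : ℕ) (hm : m < r + 1), 0 < h 0 * h ⟨m, hm⟩ := by
    intro m
    induction m with
    | zero =>
      intro hm
      have h0 := hne 0
      have e : (⟨0, hm⟩ : Fin (r + 1)) = 0 := rfl
      rw [e]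
      exact mul_self_pos.mpr h0
    | succ m ih =>
      intro hm
      have hmr : m < r := by omega
      have h1 := ih (by omega)
      have h2 := hc ⟨m, hmr⟩
      have ha : h (Fin.castSucc ⟨m, hmr⟩) ≠ 0 := hne _
      have hb : h (Fin.succ ⟨m, hmr⟩) ≠ 0 := hne _
      have h3 : 0 < h (Fin.castSucc ⟨m, hmr⟩) * h (Fin.succ ⟨m, hmr⟩) :=
        lt_of_le_of_ne h2 (Ne.symm (mul_ne_zero ha hb))
      have e1 : h (Fin.castSucc ⟨m, hmr⟩) = h ⟨m, by omega⟩ := by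
        congr 1
      have e2 : h (Fin.succ ⟨m, hmr⟩) = h ⟨m + 1, hm⟩ := by
        congr 1
      rw [e1, e2] at h3
      nlinarith [mul_pos h1 h3, sq_nonneg (h (⟨m, by omega⟩ : Fin (r + 1)))]
  have := key r (by omega)
  have : (0 : ℝ) < h 0 * h (Fin.last r) := by
    simpa [Fin.last] using this
  linarith

/-- Any gallery of alcoves in the apartment all of whose wall-crossings are in the
`J_P`-positive direction is minimal.  Alcoves are represented by generic points
`x 0, …, x r` (points not on any affine root hyperplane): consecutive alcoves are
adjacent (exactly one hyperplane `H_{β−k}`, `β ∈ Φ⁺`, separates them), and minimality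
means that the number of hyperplanes separating the first alcove from the last equals
the length `r` of the gallery.  Here `Φ⁺ = Φ_M⁺ ⊔ Φ_N` is the set of positive roots. -/
theorem jP_positive_gallery_minimal {V : Type*} [AddCommGroup V] [Module ℝ V]
    (ΦMp ΦN : Set (Module.Dual ℝ V)) (Φp : Set (Module.Dual ℝ V))
    (hpart : Φp = ΦMp ∪ ΦN) (hdisj : Disjoint ΦMp ΦN)
    (r : ℕ) (x : Fin (r + 1) → V)
    (hgen : ∀ i, ∀ β ∈ Φp, ∀ k : ℤ, β (x i) ≠ (k : ℝ))
    (hgal : ∀ i : Fin r, ∃! p : Module.Dual ℝ V × ℤ,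
      p.1 ∈ Φp ∧ Separates p.1 p.2 (x i.castSucc) (x i.succ))
    (hpos : ∀ i : Fin r, ∀ β ∈ Φp, ∀ k : ℤ,
      Separates β k (x i.castSucc) (x i.succ) →
      JPPositiveCrossing ΦMp ΦN β k (x i.castSucc) (x i.succ)) :
    Nat.card {p : Module.Dual ℝ V × ℤ //
      p.1 ∈ Φp ∧ Separates p.1 p.2 (x 0) (x (Fin.last r))} = r := by
  classical
  choose p hspec hU using hgal
  -- For each hyperplane, all crossings go in one fixed direction σ.
  have dir : ∀ β ∈ Φp, ∀ k : ℤ, ∃ σ : ℝ, (σ = 1 ∨ σ = -1) ∧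
      ∀ i : Fin r, Separates β k (x i.castSucc) (x i.succ) →
        σ * (β (x i.castSucc) - k) < 0 ∧ 0 < σ * (β (x i.succ) - k) := by
    intro β hβ k
    by_cases hcase : β ∈ ΦN ∨ 0 ≤ k
    · refine ⟨1, Or.inl rfl, ?_⟩
      intro i hsep
      rcases hpos i β hβ k hsep with ⟨hN, h1, h2⟩ | ⟨hM, ⟨hk, h1, h2⟩ | ⟨hk, h1, h2⟩⟩
      · constructor <;> nlinarith
      · constructor <;> nlinarith
      · rcases hcase with hN | hk'
        · exact absurd hN (Set.disjoint_left.mp hdisj hM)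
        · omega
    · push_neg at hcase
      refine ⟨-1, Or.inr rfl, ?_⟩
      intro i hsep
      rcases hpos i β hβ k hsep with ⟨hN, h1, h2⟩ | ⟨hM, ⟨hk, h1, h2⟩ | ⟨hk, h1, h2⟩⟩
      · exact absurd hN hcase.1
      · exact absurd hk (by omega)
      · constructor <;> nlinarith
  -- Key: a hyperplane crossed at step i separates the endpoints and is crossed only there.
  have key1 : ∀ β ∈ Φp, ∀ k : ℤ, ∀ i : Fin r,
      Separates β k (x i.castSucc) (x i.succ) →
      Separates β k (x 0) (x (Fin.last r)) ∧
      ∀ j : Fin r, Separates β k (x j.castSucc) (x j.succ) → j = i := by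
    intro β hβ k i hsep
    obtain ⟨σ, hσ, hd⟩ := dir β hβ k
    have hσ0 : σ ≠ 0 := by rcases hσ with h | h <;> simp [h]
    set h : Fin (r + 1) → ℝ := fun j => σ * (β (x j) - k) with hh
    have hne : ∀ j, h j ≠ 0 := fun j =>
      mul_ne_zero hσ0 (sub_ne_zero.mpr (hgen j β hβ k))
    have hstep : ∀ j : Fin r, 0 < h j.castSucc → 0 < h j.succ := by
      intro j hp
      by_cases hcr : Separates β k (x j.castSucc) (x j.succ)
      · exact (hd j hcr).2
      · unfold Separates at hcr
        push_neg at hcr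
        have ha : β (x j.castSucc) - k ≠ 0 := sub_ne_zero.mpr (hgen _ β hβ k)
        have hb : β (x j.succ) - k ≠ 0 := sub_ne_zero.mpr (hgen _ β hβ k)
        have hprod : 0 < (β (x j.castSucc) - k) * (β (x j.succ) - k) :=
          lt_of_le_of_ne hcr (Ne.symm (mul_ne_zero ha hb))
        simp only [hh] at hp ⊢
        rcases hσ with hs | hs <;> subst hs <;> nlinarith
    have hcr1 : h i.castSucc < 0 := (hd i hsep).1
    have hcr2 : 0 < h i.succ := (hd i hsep).2
    have h0neg : h 0 < 0 := by
      rcases lt_or_gt_of_ne (hne 0) with hlt | hgt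
      · exact hlt
      · have := prop_up r h hstep 0 i.castSucc (by simp [Fin.le_def]) hgt
        linarith
    have hlastpos : 0 < h (Fin.last r) := by
      have hle : i.succ ≤ Fin.last r := by
        simp [Fin.le_def, Fin.last]
      exact prop_up r h hstep i.succ (Fin.last r) hle hcr2
    constructor
    · show (β (x 0) - k) * (β (x (Fin.last r)) - k) < 0
      simp only [hh] at h0neg hlastpos
      rcases hσ with hs | hs <;> subst hs <;> nlinarith
    · intro j hsepj
      have hj1 : h j.castSucc < 0 := (hd j hsepj).1
      have hj2 : 0 < h j.succ := (hd j hsepj).2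
      by_contra hne'
      rcases lt_or_gt_of_ne hne' with hlt | hgt
      · have hle : j.succ ≤ i.castSucc := by
          simp [Fin.le_def]
          omega
        have := prop_up r h hstep j.succ i.castSucc hle hj2
        linarith
      · have hle : i.succ ≤ j.castSucc := by
          simp [Fin.le_def]
          omega
        have := prop_up r h hstep i.succ j.castSucc hle hcr2
        linarith
  -- Any hyperplane separating the endpoints is crossed at some step.
  have key2 : ∀ β ∈ Φp, ∀ k : ℤ, Separates β k (x 0) (x (Fin.last r)) →
      ∃ i : Fin r, Separates β k (x i.castSucc) (x i.succ) := by
    intro β hβ k hsep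
    exact exists_flip r (fun j => β (x j) - k)
      (fun j => sub_ne_zero.mpr (hgen j β hβ k)) hsep
  -- The bijection between steps and separating hyperplanes.
  let e : Fin r → {q : Module.Dual ℝ V × ℤ //
      q.1 ∈ Φp ∧ Separates q.1 q.2 (x 0) (x (Fin.last r))} :=
    fun i => ⟨p i, (hspec i).1, (key1 _ (hspec i).1 _ i (hspec i).2).1⟩
  have hbij : Function.Bijective e := by
    constructor
    · intro i j hij
      have hpij : p i = p j := congrArg Subtype.val hij
      have := (key1 _ (hspec j).1 _ j (hspec j).2).2 i (by
        rw [← hpij]; exact (hspec i).2)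
      exact this
    · rintro ⟨q, hq1, hq2⟩
      obtain ⟨m, hm⟩ := key2 q.1 hq1 q.2 hq2
      refine ⟨m, Subtype.ext ?_⟩
      exact (hU m q ⟨hq1, hm⟩).symm
  have hc := Nat.card_congr (Equiv.ofBijective e hbij)
  simp only [Nat.card_eq_fintype_card, Fintype.card_fin] at hc
  exact hc.symm
end

section
/- Suppose ν is a cocharacter annihilated by all roots of Φ_M. Then ν ≥^P μ if and only if the set C_μ = Conv(Wμ) ∩ Δ_M is contained in the translated dominant chamber Δ_G − ν. -/
open Set

/-- The relation `ν ≥^P μ` for a real vector `μ`: `⟨α, ν⟩ = 0` for all roots `α` of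
the Levi `M`, and `⟨α, ν + λ⟩ ≥ 0` for all `λ ∈ Conv(Wμ)` and all `α ∈ Φ_N`. -/
def geqPConv {V : Type*} [AddCommGroup V] [Module ℝ V]
    (ΦM ΦN : Set (Module.Dual ℝ V)) (W : Subgroup (V ≃ₗ[ℝ] V)) (ν μ : V) : Prop :=
  (∀ α ∈ ΦM, α ν = 0) ∧
  ∀ lam ∈ convexHull ℝ (WOrbit W μ), ∀ α ∈ ΦN, 0 ≤ α (ν + lam)

/-- Suppose `ν` is annihilated by all roots of `Φ_M`.  Then `ν ≥^P μ` if and only if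
`C_μ = Conv(Wμ) ∩ Δ_M` is contained in the translated dominant chamber `Δ_G − ν`.
Here `Δ_G = domCone (ΦMp ∪ ΦN)`, `Δ_M = domCone ΦMp`, `W_M ≤ W` is the Weyl group of
the Levi (every vector has an `M`-dominant representative under `W_M`, `W_M` preserves
`Φ_N` and fixes `ν`). -/
theorem geqP_iff_convex_subset {V : Type*} [AddCommGroup V] [Module ℝ V]
    (W WM : Subgroup (V ≃ₗ[ℝ] V)) (hle : WM ≤ W)
    (ΦM ΦMp ΦN : Set (Module.Dual ℝ V)) (hMp : ΦMp ⊆ ΦM)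
    (μ ν : V) (hμ : μ ∈ domCone (ΦMp ∪ ΦN))
    (hν : ∀ α ∈ ΦM, α ν = 0)
    (hdomM : ∀ v : V, ∃ w ∈ WM, (w : V ≃ₗ[ℝ] V) v ∈ domCone ΦMp)
    (hNstab : ∀ w ∈ WM, ∀ α ∈ ΦN,
      α.comp ((w⁻¹ : V ≃ₗ[ℝ] V) : V →ₗ[ℝ] V) ∈ ΦN)
    (hfix : ∀ w ∈ WM, (w : V ≃ₗ[ℝ] V) ν = ν) :
    geqPConv ΦM ΦN W ν μ ↔
      (convexHull ℝ (WOrbit W μ) ∩ domCone ΦMp) ⊆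
        {v | v + ν ∈ domCone (ΦMp ∪ ΦN)} := by
  constructor
  · rintro ⟨h1, h2⟩ v ⟨hvc, hvd⟩ α hα
    rcases hα with hα | hα
    · have := hvd α hα
      have hz := h1 α (hMp hα)
      simp only [map_add, hz]
      linarith
    · have := h2 v hvc α hα
      rw [map_add] at this ⊢
      linarith
  · intro h
    refine ⟨hν, ?_⟩
    intro lam hlam α hα
    obtain ⟨w, hw, hwd⟩ := hdomM lam
    -- w lam ∈ convexHull (WOrbit W μ)
    have hstab : ((w : V ≃ₗ[ℝ] V) : V →ₗ[ℝ] V) '' WOrbit W μ ⊆ WOrbit W μ := by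
      rintro _ ⟨x, ⟨u, hu, rfl⟩, rfl⟩
      exact ⟨w * u, mul_mem (hle hw) hu, rfl⟩
    have hconv : (w : V ≃ₗ[ℝ] V) lam ∈ convexHull ℝ (WOrbit W μ) := by
      have := Set.image_subset_iff.mp
        (((((w : V ≃ₗ[ℝ] V) : V →ₗ[ℝ] V)).image_convexHull (WOrbit W μ)).symm ▸
          convexHull_mono hstab) hlam
      exact this
    have hmem := h ⟨hconv, hwd⟩
    have hβ := hNstab w hw α hα
    have := hmem (α.comp ((w⁻¹ : V ≃ₗ[ℝ] V) : V →ₗ[ℝ] V)) (Or.inr hβ)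
    simp only [Set.mem_setOf_eq, LinearMap.comp_apply, map_add] at this
    have hinv : ((w⁻¹ : V ≃ₗ[ℝ] V) : V →ₗ[ℝ] V) ((w : V ≃ₗ[ℝ] V) lam) = lam :=
      w.symm_apply_apply lam
    have hinvν : ((w⁻¹ : V ≃ₗ[ℝ] V) : V →ₗ[ℝ] V) ν = ν := hfix w⁻¹ (inv_mem hw)
    rw [hinv, hinvν] at this
    have h2 : α (ν + lam) = α ν + α lam := map_add α ν lam
    linarith
end

section
/- Suppose ν is a cocharacter annihilated by all roots of Φ_M. Then ν ≥^P μ if and only if for every positive root α ∈ Φ⁺ \ Φ_M, the function α is bounded below on C_μ = Conv(Wμ) ∩ Δ_M by α(−ν), i.e. ⟨α, x⟩ ≥ −⟨α, ν⟩ for all x ∈ C_μ. -/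
open Set

lemma worbit_img {V : Type*} [AddCommGroup V] [Module ℝ V]
    (W : Subgroup (V ≃ₗ[ℝ] V)) (μ : V) (w : V ≃ₗ[ℝ] V) (hw : w ∈ W) :
    ((w : V →ₗ[ℝ] V) : V → V) '' WOrbit W μ = WOrbit W μ := by
  ext x
  constructor
  · rintro ⟨y, ⟨u, hu, rfl⟩, rfl⟩
    exact ⟨w * u, mul_mem hw hu, rfl⟩
  · rintro ⟨u, hu, rfl⟩
    refine ⟨(w⁻¹ * u) μ, ⟨w⁻¹ * u, mul_mem (inv_mem hw) hu, rfl⟩, ?_⟩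
    show w ((w⁻¹ * u) μ) = u μ
    show (w * w⁻¹) (u μ) = u μ
    rw [mul_inv_cancel]
    rfl

lemma hull_mem {V : Type*} [AddCommGroup V] [Module ℝ V]
    (W : Subgroup (V ≃ₗ[ℝ] V)) (μ : V) (w : V ≃ₗ[ℝ] V) (hw : w ∈ W)
    (x : V) (hx : x ∈ convexHull ℝ (WOrbit W μ)) :
    w x ∈ convexHull ℝ (WOrbit W μ) := by
  have h := LinearMap.image_convexHull (w : V →ₗ[ℝ] V) (WOrbit W μ)
  rw [worbit_img W μ w hw] at h
  rw [← h]
  exact ⟨x, hx, rfl⟩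

/-- Suppose `ν` is annihilated by all roots of `Φ_M`.  Then `ν ≥^P μ` if and only if
for every positive root `α ∈ Φ⁺ \ Φ_M = Φ_N`, the function `α` is bounded below on
`C_μ = Conv(Wμ) ∩ Δ_M` by `α(−ν)`, i.e. `⟨α, x⟩ ≥ −⟨α, ν⟩` for all `x ∈ C_μ`.
Here `W_M ≤ W` is the Weyl group of the Levi (every vector has an `M`-dominant
representative under `W_M`, `W_M` preserves `Φ_N` and fixes `ν`). -/
theorem geqP_iff_bounded_below {V : Type*} [AddCommGroup V] [Module ℝ V]
    (W WM : Subgroup (V ≃ₗ[ℝ] V)) (hle : WM ≤ W)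
    (ΦM ΦMp ΦN : Set (Module.Dual ℝ V)) (hMp : ΦMp ⊆ ΦM)
    (μ ν : V) (hμ : μ ∈ domCone (ΦMp ∪ ΦN))
    (hν : ∀ α ∈ ΦM, α ν = 0)
    (hdomM : ∀ v : V, ∃ w ∈ WM, (w : V ≃ₗ[ℝ] V) v ∈ domCone ΦMp)
    (hNstab : ∀ w ∈ WM, ∀ α ∈ ΦN,
      α.comp ((w⁻¹ : V ≃ₗ[ℝ] V) : V →ₗ[ℝ] V) ∈ ΦN)
    (hfix : ∀ w ∈ WM, (w : V ≃ₗ[ℝ] V) ν = ν) :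
    geqPConv ΦM ΦN W ν μ ↔
      ∀ α ∈ ΦN, ∀ x ∈ convexHull ℝ (WOrbit W μ) ∩ domCone ΦMp,
        -(α ν) ≤ α x := by
  constructor
  · rintro ⟨-, h⟩ α hα x ⟨hx, -⟩
    have := h x hx α hα
    simp only [map_add] at this
    linarith
  · rintro h
    refine ⟨hν, fun lam hlam α hα => ?_⟩
    obtain ⟨w, hw, hwlam⟩ := hdomM lam
    have hwl : (w : V ≃ₗ[ℝ] V) lam ∈ convexHull ℝ (WOrbit W μ) :=
      hull_mem W μ w (hle hw) lam hlam
    have hα' := hNstab w hw α hα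
    have key := h _ hα' _ ⟨hwl, hwlam⟩
    have e1 : α.comp (((w⁻¹ : V ≃ₗ[ℝ] V)) : V →ₗ[ℝ] V) ν = α ν := by
      show α ((w⁻¹ : V ≃ₗ[ℝ] V) ν) = α ν
      rw [hfix w⁻¹ (inv_mem hw)]
    have e2 : α.comp (((w⁻¹ : V ≃ₗ[ℝ] V)) : V →ₗ[ℝ] V) ((w : V ≃ₗ[ℝ] V) lam)
        = α lam := by
      show α ((w⁻¹ : V ≃ₗ[ℝ] V) ((w : V ≃ₗ[ℝ] V) lam)) = α lam
      congr 1
      show ((w⁻¹ * w : V ≃ₗ[ℝ] V)) lam = lam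
      rw [inv_mul_cancel]
      rfl
    rw [e1, e2] at key
    simp only [map_add]
    linarith
end
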